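/- arXiv:1107.1130 — 3 statements merged into one kernel-verified Lean document; each statement's English description precedes it below -/
import Mathlib

section
/- For dismal numbers m and n with n ≠ 0 and m ≠ 0, the length (number of base-b digits) of the dismal sum m ⊞ n equals max(len(m), len(n)), and the length of the dismal product m ⊠ n equals len(m) + len(n) − 1. -/
/-!
Neither dismal operation produces carries, so the length of `m ⊞ n` or `m ⊠ n` is one more than
the index of its top nonzero digit. For `⊞` that index is the larger of the two top indices. The
`k`-th digit of `m ⊠ n` is a maximum of `min (m_i) (n_j)` over `i + j = k`; it vanishes once `k`
exceeds the sum of the top indices of `m` and `n`, and at that sum it is the minimum of the two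
leading digits, which is nonzero.
-/

/-- The `i`-th base-`b` digit of `n`. -/
def digit (b n i : ℕ) : ℕ := n / b ^ i % b

/-- Dismal addition in base `b`: digitwise maximum of base-`b` digits. -/
def dadd (b m n : ℕ) : ℕ :=
  ∑ i ∈ Finset.range (m + n + 1), max (digit b m i) (digit b n i) * b ^ i

/-- Dismal multiplication in base `b`: digit convolution with `min` as digit
product and `max` as digit sum (no carries). -/
def dmul (b m n : ℕ) : ℕ :=
  ∑ k ∈ Finset.range (m + n + 1),
    ((Finset.range (k + 1)).sup fun i => min (digit b m i) (digit b n (k - i))) * b ^ k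

/-- The number of base-`b` digits of `n`. -/
def dlen (b n : ℕ) : ℕ := (Nat.digits b n).length

open Finset

section Digits

variable {b : ℕ}

lemma digit_lt (hb : 0 < b) (n i : ℕ) : digit b n i < b :=
  Nat.mod_lt _ hb

lemma digit_eq_getD (hb : 2 ≤ b) (n i : ℕ) : digit b n i = (b.digits n).getD i 0 :=
  (Nat.getD_digits n i hb).symm

lemma digit_eq_zero_of_dlen_le (hb : 2 ≤ b) {n i : ℕ} (hi : dlen b n ≤ i) :
    digit b n i = 0 := by
  rw [digit_eq_getD hb, List.getD_eq_default _ _ hi]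

lemma digit_dlen_sub_one_ne_zero (hb : 2 ≤ b) {n : ℕ} (hn : n ≠ 0) :
    digit b n (dlen b n - 1) ≠ 0 := by
  have hlen : dlen b n - 1 < (b.digits n).length := by
    rw [dlen, Nat.length_digits b n hb hn]; omega
  have hlast := Nat.getLast_digit_ne_zero b hn
  rw [List.getLast_eq_getElem] at hlast
  rwa [digit_eq_getD hb, List.getD_eq_getElem _ _ hlen]

lemma dlen_le_self (hb : 2 ≤ b) (n : ℕ) : dlen b n ≤ n :=
  (Nat.digits_length_le_iff hb n).2 (Nat.lt_pow_self hb)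

lemma dlen_pos_iff {n : ℕ} : 0 < dlen b n ↔ n ≠ 0 :=
  List.length_pos_iff.trans Nat.digits_ne_nil_iff_ne_zero

lemma sum_mul_pow_lt_pow {c : ℕ → ℕ} {K : ℕ} (hc : ∀ i < K, c i < b) :
    ∑ i ∈ range K, c i * b ^ i < b ^ K := by
  induction K with
  | zero => simp
  | succ K ih =>
    have hS := ih fun i hi => hc i (by omega)
    have hcK : c K + 1 ≤ b := hc K (by omega)
    rw [sum_range_succ, pow_succ]
    nlinarith [Nat.mul_le_mul_right (b ^ K) hcK]

lemma dlen_sum_mul_pow (hb : 2 ≤ b) {c : ℕ → ℕ} {K N : ℕ} (hc : ∀ i, c i < b)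
    (hzero : ∀ i, K ≤ i → c i = 0) (htop : K ≠ 0 → c (K - 1) ≠ 0) (hKN : K ≤ N) :
    dlen b (∑ i ∈ range N, c i * b ^ i) = K := by
  have htrunc : ∑ i ∈ range N, c i * b ^ i = ∑ i ∈ range K, c i * b ^ i := by
    refine (sum_subset (range_subset_range.2 hKN) fun i _ hi => ?_).symm
    rw [hzero i (by simpa using hi), zero_mul]
  rw [htrunc]
  refine le_antisymm ((Nat.digits_length_le_iff hb _).2 (sum_mul_pow_lt_pow fun i _ => hc i)) ?_
  rcases Nat.eq_zero_or_pos K with rfl | hK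
  · exact Nat.zero_le _
  refine Nat.le_of_pred_lt ((Nat.lt_digits_length_iff hb _).2 ?_)
  calc b ^ (K - 1) ≤ c (K - 1) * b ^ (K - 1) :=
        Nat.le_mul_of_pos_left _ (Nat.pos_of_ne_zero (htop hK.ne'))
    _ ≤ ∑ i ∈ range K, c i * b ^ i :=
        single_le_sum (f := fun i => c i * b ^ i) (fun _ _ => Nat.zero_le _)
          (mem_range.2 (by omega))

lemma dlen_dadd (hb : 2 ≤ b) (m n : ℕ) :
    dlen b (dadd b m n) = max (dlen b m) (dlen b n) := by
  refine dlen_sum_mul_pow hb (fun i => max_lt (digit_lt (by omega) m i) (digit_lt (by omega) n i))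
    (fun i hi => ?_) (fun hK => ?_) ?_
  · rw [digit_eq_zero_of_dlen_le hb (le_of_max_le_left hi),
      digit_eq_zero_of_dlen_le hb (le_of_max_le_right hi), max_self]
  · rcases le_total (dlen b n) (dlen b m) with h | h
    · rw [max_eq_left h] at hK ⊢
      simp [digit_dlen_sub_one_ne_zero hb (dlen_pos_iff.1 (Nat.pos_of_ne_zero hK))]
    · rw [max_eq_right h] at hK ⊢
      simp [digit_dlen_sub_one_ne_zero hb (dlen_pos_iff.1 (Nat.pos_of_ne_zero hK))]
  · have := dlen_le_self hb m
    have := dlen_le_self hb n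
    omega

lemma dlen_dmul (hb : 2 ≤ b) {m n : ℕ} (hm : m ≠ 0) (hn : n ≠ 0) :
    dlen b (dmul b m n) = dlen b m + dlen b n - 1 := by
  have hlead_m := Nat.pos_of_ne_zero (digit_dlen_sub_one_ne_zero hb hm)
  have hlead_n := Nat.pos_of_ne_zero (digit_dlen_sub_one_ne_zero hb hn)
  have hlen_m : 0 < dlen b m := dlen_pos_iff.2 hm
  have hlen_n : 0 < dlen b n := dlen_pos_iff.2 hn
  refine dlen_sum_mul_pow hb (fun k => ?_) (fun k hk => ?_) (fun _ => ?_) ?_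
  · refine (Finset.sup_lt_iff (show ⊥ < b by rw [Nat.bot_eq_zero]; omega)).2 fun i _ => ?_
    exact (min_le_left _ _).trans_lt (digit_lt (by omega) m i)
  · refine Nat.le_zero.mp (Finset.sup_le fun i hi => ?_)
    rcases le_or_gt (dlen b m) i with h | h
    · simp [digit_eq_zero_of_dlen_le hb h]
    · simp [digit_eq_zero_of_dlen_le hb (show dlen b n ≤ k - i by omega)]
  · have hmem : dlen b m - 1 ∈ range (dlen b m + dlen b n - 1 - 1 + 1) := mem_range.2 (by omega)
    have hsub : dlen b m + dlen b n - 1 - 1 - (dlen b m - 1) = dlen b n - 1 := by omega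
    refine (lt_of_lt_of_le ?_ (le_sup (f := fun i =>
      min (digit b m i) (digit b n (dlen b m + dlen b n - 1 - 1 - i))) hmem)).ne'
    simpa only [hsub] using lt_min hlead_m hlead_n
  · have := dlen_le_self hb m
    have := dlen_le_self hb n
    omega

end Digits

/-- lengths of a dismal sum and a dismal product. -/
theorem dismal_len_add_mul (b : ℕ) (hb : 2 ≤ b) (m n : ℕ) (hm : m ≠ 0) (hn : n ≠ 0) :
    dlen b (dadd b m n) = max (dlen b m) (dlen b n) ∧
    dlen b (dmul b m n) = dlen b m + dlen b n - 1 :=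
  ⟨dlen_dadd hb m n, dlen_dmul hb hm hn⟩
end

section
/- In base b dismal arithmetic, if p ⊠ q = b−1 then p = q = b−1; i.e., b−1 is the only unit. -/
/-!
A nonzero dismal product `p ⊠ q` has a nonzero digit in position `log_b p + log_b q`, namely at
least the minimum of the two leading digits, so `p ⊠ q ≥ b ^ (log_b p + log_b q)`. If the product
is the single digit `b - 1`, both logarithms vanish, i.e. `p` and `q` are single digits, and then
`p ⊠ q = min p q`, which equals `b - 1` only when `p = q = b - 1`.
-/

lemma digit_eq_zero_of_lt_pow {b n i : ℕ} (hn : n < b ^ i) : digit b n i = 0 := by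
  simp [digit, Nat.div_eq_of_lt hn]

lemma digit_eq_zero_of_lt {b n i : ℕ} (hn : n < b) (hi : i ≠ 0) : digit b n i = 0 :=
  digit_eq_zero_of_lt_pow (hn.trans_le (Nat.le_self_pow hi b))

lemma digit_zero_of_lt {b n : ℕ} (hn : n < b) : digit b n 0 = n := by
  simp [digit, Nat.mod_eq_of_lt hn]

lemma digit_zero_left (b i : ℕ) : digit b 0 i = 0 := by
  simp [digit]

lemma digit_log_ne_zero {b n : ℕ} (hb : 2 ≤ b) (hn : n ≠ 0) : digit b n (Nat.log b n) ≠ 0 := by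
  have hpow : 0 < b ^ Nat.log b n := by positivity
  have hlead_lt : n / b ^ Nat.log b n < b := by
    rw [Nat.div_lt_iff_lt_mul hpow, ← pow_succ']
    exact Nat.lt_pow_succ_log_self hb n
  have hlead_pos : 0 < n / b ^ Nat.log b n :=
    Nat.div_pos (Nat.pow_log_le_self b hn) hpow
  rw [digit, Nat.mod_eq_of_lt hlead_lt]
  exact hlead_pos.ne'

lemma dmul_zero_left (b q : ℕ) : dmul b 0 q = 0 := by
  simp [dmul, digit_zero_left]

lemma dmul_zero_right (b p : ℕ) : dmul b p 0 = 0 := by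
  simp [dmul, digit_zero_left]

lemma pow_log_add_log_le_dmul {b p q : ℕ} (hb : 2 ≤ b) (hp : p ≠ 0) (hq : q ≠ 0) :
    b ^ (Nat.log b p + Nat.log b q) ≤ dmul b p q := by
  set k := Nat.log b p + Nat.log b q
  let coeff := fun j => (Finset.range (j + 1)).sup fun i => min (digit b p i) (digit b q (j - i))
  have hcoeff : 1 ≤ coeff k := by
    have hle := Finset.le_sup (f := fun i => min (digit b p i) (digit b q (k - i)))
      (Finset.mem_range.2 (by omega : Nat.log b p < k + 1))
    simp only [k, Nat.add_sub_cancel_left] at hle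
    exact (le_min (Nat.one_le_iff_ne_zero.2 (digit_log_ne_zero hb hp))
      (Nat.one_le_iff_ne_zero.2 (digit_log_ne_zero hb hq))).trans hle
  have hk : k ∈ Finset.range (p + q + 1) := by
    have := Nat.log_le_self b p
    have := Nat.log_le_self b q
    simp only [Finset.mem_range]
    omega
  calc b ^ k ≤ coeff k * b ^ k := Nat.le_mul_of_pos_left _ hcoeff
    _ ≤ dmul b p q :=
      Finset.single_le_sum (f := fun j => coeff j * b ^ j) (fun _ _ => Nat.zero_le _) hk

lemma dmul_of_lt {b p q : ℕ} (hp : p < b) (hq : q < b) : dmul b p q = min p q := by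
  rw [dmul, Finset.sum_eq_single 0]
  · simp [digit_zero_of_lt hp, digit_zero_of_lt hq]
  · intro k _ hk
    suffices (Finset.range (k + 1)).sup (fun i => min (digit b p i) (digit b q (k - i))) = 0 by
      simp [this]
    refine Finset.sup_eq_bot_iff _ _ |>.2 fun i _ => ?_
    rcases Nat.eq_zero_or_pos i with rfl | hi
    · simp [digit_eq_zero_of_lt hq hk]
    · simp [digit_eq_zero_of_lt hp hi.ne']
  · simp

/-- `b - 1` is the only dismal unit. -/
theorem dismal_only_unit (b : ℕ) (hb : 2 ≤ b) (p q : ℕ)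
    (h : dmul b p q = b - 1) : p = b - 1 ∧ q = b - 1 := by
  have hp : p ≠ 0 := by
    rintro rfl
    rw [dmul_zero_left] at h
    omega
  have hq : q ≠ 0 := by
    rintro rfl
    rw [dmul_zero_right] at h
    omega
  have hlog : Nat.log b p + Nat.log b q = 0 := by
    by_contra hne
    have := (Nat.le_self_pow hne b).trans (pow_log_add_log_le_dmul hb hp hq)
    omega
  have hpb : p < b := by simpa [show Nat.log b p = 0 by omega] using Nat.lt_pow_succ_log_self hb p
  have hqb : q < b := by simpa [show Nat.log b q = 0 by omega] using Nat.lt_pow_succ_log_self hb q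
  rw [dmul_of_lt hpb hqb] at h
  omega
end

section
/- Every base-b number n can be written as r ⊠ (a dismal product of dismal primes) for some digit r ∈ {0,1,...,b−1}. -/
/-- A base-`b` dismal prime: a number other than `b - 1` whose only dismal
factorizations are `(b - 1) ⊠ p`. -/
def DPrime (b p : ℕ) : Prop :=
  p ≠ b - 1 ∧ ∀ m n : ℕ, dmul b m n = p →
    (m = b - 1 ∧ n = p) ∨ (m = p ∧ n = b - 1)

/-!
Raising every occurrence of the largest digit `r` of `n` to `β = b - 1` gives a number `n'` with
`n = r ⊠ n'`, so it suffices to factor numbers having a digit `β`. Such a number that is neither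
`β` nor prime is `m ⊠ m'` with neither factor a single digit (a digit factor `d ≠ β` would cap
every digit at `d`), and both factors again have a digit `β`, since a digit of a product is a max
of mins. Two factors of at least two digits are each smaller than the product, so strong induction
on `n` finishes.
-/

namespace Dismal

open Finset

variable {b : ℕ}

theorem digit_zero (b n : ℕ) : digit b n 0 = n % b := by
  simp [digit]

theorem digit_succ (b n i : ℕ) : digit b n (i + 1) = digit b (n / b) i := by
  rw [digit, digit, pow_succ', Nat.div_div_eq_div_mul]

theorem digit_lt (hb : 0 < b) (n i : ℕ) : digit b n i < b :=
  Nat.mod_lt _ hb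

theorem digit_eq_zero_of_lt_pow {n i : ℕ} (h : n < b ^ i) : digit b n i = 0 := by
  simp [digit, Nat.div_eq_of_lt h]

theorem digit_eq_zero_of_lt (hb : 1 < b) {n i : ℕ} (h : n < i) : digit b n i = 0 :=
  digit_eq_zero_of_lt_pow ((Nat.lt_pow_self hb).trans (Nat.pow_lt_pow_right hb h))

theorem pow_le_of_digit_ne_zero {n i : ℕ} (h : digit b n i ≠ 0) : b ^ i ≤ n :=
  not_lt.mp (mt digit_eq_zero_of_lt_pow h)

theorem digit_of_lt {r : ℕ} (hr : r < b) (i : ℕ) : digit b r i = if i = 0 then r else 0 := by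
  rcases i with _ | i
  · simp [digit_zero, Nat.mod_eq_of_lt hr]
  · exact digit_eq_zero_of_lt_pow (hr.trans_le (Nat.le_self_pow (by omega) b))

theorem digit_log_ne_zero (hb : 1 < b) {n : ℕ} (hn : n ≠ 0) : digit b n (Nat.log b n) ≠ 0 := by
  have hpos : 0 < b ^ Nat.log b n := by positivity
  have hlt : n / b ^ Nat.log b n < b := by
    rw [Nat.div_lt_iff_lt_mul hpos, ← pow_succ']
    exact Nat.lt_pow_succ_log_self hb n
  rw [digit, Nat.mod_eq_of_lt hlt]
  exact (Nat.div_pos (Nat.pow_log_le_self b hn) hpos).ne'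

theorem ext_digit (hb : 1 < b) {m n : ℕ} (h : ∀ i, digit b m i = digit b n i) : m = n := by
  obtain ⟨N, hm, hn⟩ : ∃ N, m < b ^ N ∧ n < b ^ N :=
    ⟨m + n, (Nat.lt_pow_self hb).trans_le (Nat.pow_le_pow_right (by omega) (by omega)),
      (Nat.lt_pow_self hb).trans_le (Nat.pow_le_pow_right (by omega) (by omega))⟩
  induction N generalizing m n with
  | zero => simp only [pow_zero, Nat.lt_one_iff] at hm hn; rw [hm, hn]
  | succ N ih =>
    rw [pow_succ'] at hm hn
    have hquot : m / b = n / b :=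
      ih (fun i => by simpa only [digit_succ] using h (i + 1))
        (Nat.div_lt_of_lt_mul hm) (Nat.div_lt_of_lt_mul hn)
    have hrem : m % b = n % b := by simpa only [digit_zero] using h 0
    rw [← Nat.div_add_mod m b, ← Nat.div_add_mod n b, hquot, hrem]

theorem digit_sum_mul_pow (hb : 0 < b) {N : ℕ} {f : ℕ → ℕ} (hf : ∀ k < N, f k < b) (i : ℕ) :
    digit b (∑ k ∈ range N, f k * b ^ k) i = if i < N then f i else 0 := by
  induction N generalizing f i with
  | zero => simp [digit]
  | succ N ih =>
    have hsplit : ∑ k ∈ range (N + 1), f k * b ^ k = b * ∑ k ∈ range N, f (k + 1) * b ^ k + f 0 := by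
      rw [sum_range_succ', mul_sum]
      simp only [pow_succ, pow_zero, mul_one]
      congr 1
      exact sum_congr rfl fun k _ => by ring
    have hf0 : f 0 < b := hf 0 (by omega)
    rw [hsplit]
    rcases i with _ | i
    · simp [digit_zero, Nat.mod_eq_of_lt hf0]
    · rw [digit_succ, Nat.mul_add_div hb, Nat.div_eq_of_lt hf0, add_zero,
        ih (fun k hk => hf (k + 1) (by omega))]
      simp

theorem digit_dmul (hb : 1 < b) (m n k : ℕ) :
    digit b (dmul b m n) k = (range (k + 1)).sup fun i => min (digit b m i) (digit b n (k - i)) := by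
  have hcoeff : ∀ k, ((range (k + 1)).sup fun i => min (digit b m i) (digit b n (k - i))) < b :=
    fun k => (Finset.sup_lt_iff (Nat.bot_eq_zero ▸ by omega)).2 fun i _ =>
      (min_le_left _ _).trans_lt (digit_lt (by omega) _ _)
  rw [dmul, digit_sum_mul_pow (by omega) (fun k _ => hcoeff k)]
  split_ifs with hk
  · rfl
  · refine (Nat.eq_zero_of_le_zero (Finset.sup_le fun i hi => ?_)).symm
    rcases le_or_gt i m with him | him
    · simp [digit_eq_zero_of_lt hb (show n < k - i by omega)]
    · simp [digit_eq_zero_of_lt hb him]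

theorem lt_digit_dmul_iff (hb : 1 < b) {m n k d : ℕ} :
    d < digit b (dmul b m n) k ↔ ∃ i j, i + j = k ∧ d < digit b m i ∧ d < digit b n j := by
  rw [digit_dmul hb, Finset.lt_sup_iff]
  simp only [mem_range, lt_min_iff]
  constructor
  · rintro ⟨i, hi, h⟩
    exact ⟨i, k - i, by omega, h⟩
  · rintro ⟨i, j, rfl, h⟩
    exact ⟨i, by omega, by simpa using h⟩

theorem dmul_comm (hb : 1 < b) (m n : ℕ) : dmul b m n = dmul b n m :=
  ext_digit hb fun _ => eq_of_forall_lt_iff fun _ => by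
    simp only [lt_digit_dmul_iff hb]
    constructor <;> rintro ⟨i, j, rfl, hi, hj⟩ <;> exact ⟨j, i, add_comm _ _, hj, hi⟩

theorem dmul_assoc (hb : 1 < b) (m n p : ℕ) : dmul b (dmul b m n) p = dmul b m (dmul b n p) :=
  ext_digit hb fun _ => eq_of_forall_lt_iff fun _ => by
    simp only [lt_digit_dmul_iff hb]
    constructor
    · rintro ⟨_, j, rfl, ⟨a, c, rfl, ha, hc⟩, hj⟩
      exact ⟨a, c + j, by ring, ha, c, j, rfl, hc, hj⟩
    · rintro ⟨a, _, rfl, ha, c, j, rfl, hc, hj⟩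
      exact ⟨a + c, j, by ring, ⟨a, c, rfl, ha, hc⟩, hj⟩

theorem digit_dmul_of_lt (hb : 1 < b) {r : ℕ} (hr : r < b) (x k : ℕ) :
    digit b (dmul b r x) k = min r (digit b x k) :=
  eq_of_forall_lt_iff fun d => by
    rw [lt_digit_dmul_iff hb, lt_min_iff]
    constructor
    · rintro ⟨i, j, rfl, hi, hj⟩
      rw [digit_of_lt hr] at hi
      split_ifs at hi with hi0
      · subst hi0
        exact ⟨hi, by simpa using hj⟩
      · omega
    · rintro ⟨hdr, hdx⟩
      exact ⟨0, k, zero_add k, by simpa [digit_of_lt hr] using hdr, hdx⟩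

theorem dmul_pred_left (hb : 1 < b) (x : ℕ) : dmul b (b - 1) x = x :=
  ext_digit hb fun k => by
    rw [digit_dmul_of_lt hb (by omega)]
    exact min_eq_right (Nat.le_pred_of_lt (digit_lt (by omega) x k))

theorem dmul_pred_right (hb : 1 < b) (x : ℕ) : dmul b x (b - 1) = x := by
  rw [dmul_comm hb, dmul_pred_left hb]

theorem lt_dmul (hb : 1 < b) {m n : ℕ} (hm : m ≠ 0) (hn : b ≤ n) : m < dmul b m n := by
  have hlog : 0 < Nat.log b n := Nat.log_pos hb hn
  have htop : digit b (dmul b m n) (Nat.log b m + Nat.log b n) ≠ 0 :=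
    Nat.pos_iff_ne_zero.mp <| (lt_digit_dmul_iff hb).2
      ⟨_, _, rfl, Nat.pos_of_ne_zero (digit_log_ne_zero hb hm),
        Nat.pos_of_ne_zero (digit_log_ne_zero hb (by omega))⟩
  calc m < b ^ (Nat.log b m + 1) := Nat.lt_pow_succ_log_self hb m
    _ ≤ b ^ (Nat.log b m + Nat.log b n) := Nat.pow_le_pow_right (by omega) (by omega)
    _ ≤ dmul b m n := pow_le_of_digit_ne_zero htop

theorem foldr_dmul (hb : 1 < b) (l : List ℕ) (x : ℕ) :
    l.foldr (dmul b) x = dmul b (l.foldr (dmul b) (b - 1)) x := by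
  induction l with
  | nil => exact (dmul_pred_left hb x).symm
  | cons p l ih => simp only [List.foldr_cons, ih, dmul_assoc hb]

theorem le_of_digit_dmul_eq_pred (hb : 1 < b) {r x k : ℕ} (hr : r ≠ b - 1)
    (h : digit b (dmul b r x) k = b - 1) : b ≤ r := by
  by_contra! hrb
  have := digit_dmul_of_lt hb hrb x k ▸ min_le_left r (digit b x k)
  omega

theorem exists_digit_eq_pred_of_digit_dmul_eq_pred (hb : 1 < b) {m n k : ℕ}
    (h : digit b (dmul b m n) k = b - 1) :
    (∃ i, digit b m i = b - 1) ∧ ∃ j, digit b n j = b - 1 := by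
  obtain ⟨i, j, -, hi, hj⟩ := (lt_digit_dmul_iff hb (d := b - 2)).1 (by rw [h]; omega)
  have := digit_lt (b := b) (by omega) m i
  have := digit_lt (b := b) (by omega) n j
  exact ⟨⟨i, by omega⟩, ⟨j, by omega⟩⟩

theorem exists_dmul_digit_eq_pred (hb : 1 < b) (n : ℕ) :
    ∃ r < b, ∃ n', (∃ k, digit b n' k = b - 1) ∧ dmul b r n' = n := by
  obtain ⟨k₀, hk₀, hrk₀⟩ := exists_mem_eq_sup (range (n + 1)) nonempty_range_add_one (digit b n)
  set r := (range (n + 1)).sup (digit b n)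
  have hle : ∀ k, digit b n k ≤ r := fun k => by
    rcases lt_or_ge k (n + 1) with hk | hk
    · exact le_sup (f := digit b n) (mem_range.2 hk)
    · rw [digit_eq_zero_of_lt hb hk]
      exact Nat.zero_le r
  have hrb : r < b := hrk₀ ▸ digit_lt (by omega) n k₀
  set g : ℕ → ℕ := fun k => if digit b n k = r then b - 1 else digit b n k
  have hg : ∀ k < n + 1, g k < b := fun k _ => by
    simp only [g]
    split_ifs
    · omega
    · exact digit_lt (by omega) n k
  have hdigit := digit_sum_mul_pow (by omega) hg
  refine ⟨r, hrb, ∑ k ∈ range (n + 1), g k * b ^ k, ⟨k₀, ?_⟩, ext_digit hb fun k => ?_⟩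
  · rw [hdigit, if_pos (mem_range.1 hk₀)]
    simp [g, hrk₀]
  · rw [digit_dmul_of_lt hb hrb, hdigit]
    have := hle k
    split_ifs with hk
    · simp only [g]
      split_ifs <;> omega
    · rw [digit_eq_zero_of_lt hb (by omega)]
      exact min_zero r

theorem exists_dprime_factors (hb : 1 < b) {n k : ℕ} (hk : digit b n k = b - 1) :
    ∃ l : List ℕ, (∀ p ∈ l, DPrime b p) ∧ l.foldr (dmul b) (b - 1) = n := by
  induction n using Nat.strong_induction_on generalizing k with
  | _ n ih =>
  by_cases hβ : n = b - 1
  · exact ⟨[], by simp, hβ.symm⟩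
  by_cases hp : DPrime b n
  · exact ⟨[n], by simpa using hp, dmul_pred_right hb n⟩
  obtain ⟨m, m', hmm', hleft, hright⟩ : ∃ m m', dmul b m m' = n ∧
      ¬(m = b - 1 ∧ m' = n) ∧ ¬(m = n ∧ m' = b - 1) := by
    simpa [DPrime, hβ] using hp
  have hm : b ≤ m := le_of_digit_dmul_eq_pred hb
    (fun h => hleft ⟨h, by rw [← hmm', h, dmul_pred_left hb]⟩) (hmm' ▸ hk)
  have hm' : b ≤ m' := le_of_digit_dmul_eq_pred hb
    (fun h => hright ⟨by rw [← hmm', h, dmul_pred_right hb], h⟩)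
    (dmul_comm hb m m' ▸ hmm' ▸ hk)
  obtain ⟨⟨i, hi⟩, ⟨j, hj⟩⟩ := exists_digit_eq_pred_of_digit_dmul_eq_pred hb (hmm' ▸ hk)
  obtain ⟨l, hl, hlm⟩ := ih m (hmm' ▸ lt_dmul hb (by omega) hm') hi
  obtain ⟨l', hl', hlm'⟩ :=
    ih m' (hmm' ▸ dmul_comm hb m' m ▸ lt_dmul hb (by omega) hm) hj
  refine ⟨l ++ l', fun p hp => (List.mem_append.1 hp).elim (hl p) (hl' p), ?_⟩
  rw [List.foldr_append, foldr_dmul hb l, hlm, hlm', hmm']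

end Dismal

/-- every base-`b` number is a digit `r` times a dismal product
of dismal primes. -/
theorem dismal_factor_r_times_primes (b : ℕ) (hb : 2 ≤ b) (n : ℕ) :
    ∃ r : ℕ, r < b ∧ ∃ l : List ℕ, (∀ p ∈ l, DPrime b p) ∧
      dmul b r (l.foldr (dmul b) (b - 1)) = n := by
  obtain ⟨r, hr, n', ⟨k, hk⟩, hrn'⟩ := Dismal.exists_dmul_digit_eq_pred hb n
  obtain ⟨l, hl, hln'⟩ := Dismal.exists_dprime_factors hb hk
  exact ⟨r, hr, l, hl, by rw [hln', hrn']⟩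
end
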